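/- arXiv:1709.01152 — 3 statements merged into one kernel-verified Lean document; each statement's English description precedes it below -/
import Mathlib

section
/- Let q > 1 be an integer, n ≥ 2, and t = ⌊log_q(n-1)⌋ + 1. Define φ(r) = (r - q^c)/(q^c - q^(c-1)) + c·q with c = ⌊log_q r⌋. Then for every integer r with 1 ≤ r ≤ n - 1, we have 0 ≤ φ(r) ≤ t·q. -/
/-- Node potential `φ(r) = (r - q^c)/(q^c - q^(c-1)) + c·q` with `c = ⌊log_q r⌋`. -/
def phi (q r : ℕ) : ℚ :=
  ((r : ℚ) - (q : ℚ) ^ (Nat.log q r : ℤ)) /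
      ((q : ℚ) ^ (Nat.log q r : ℤ) - (q : ℚ) ^ ((Nat.log q r : ℤ) - 1)) +
    (Nat.log q r : ℚ) * q

/-- With `t = ⌊log_q (n-1)⌋ + 1`, for every `1 ≤ r ≤ n - 1` we have `0 ≤ φ(r) ≤ t·q`. -/
theorem phi_bounds (q n r : ℕ) (hq : 1 < q) (hn : 2 ≤ n)
    (hr1 : 1 ≤ r) (hrn : r ≤ n - 1) :
    0 ≤ phi q r ∧ phi q r ≤ ((Nat.log q (n - 1) + 1 : ℕ) : ℚ) * q := by
  set c := Nat.log q r with hc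
  have hq1 : (1:ℚ) < q := by exact_mod_cast hq
  have hq0 : (0:ℚ) < q := by linarith
  have hne : (q:ℚ) ≠ 0 := ne_of_gt hq0
  have hmono : (q:ℚ)^((c:ℤ)-1) < (q:ℚ)^(c:ℤ) := zpow_lt_zpow_right₀ hq1 (by omega)
  have hD : (0:ℚ) < (q:ℚ)^(c:ℤ) - (q:ℚ)^((c:ℤ)-1) := by linarith
  have hcast : ((q^c : ℕ):ℚ) = (q:ℚ)^(c:ℤ) := by push_cast; rw [zpow_natCast]
  have hcast1 : ((q^(c+1) : ℕ):ℚ) = (q:ℚ)^((c:ℤ)+1) := by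
    push_cast; rw [← zpow_natCast]; norm_num
  have hlow : (q:ℚ)^(c:ℤ) ≤ r := by
    rw [← hcast]; exact_mod_cast Nat.pow_log_le_self q (by omega)
  have hhigh : (r:ℚ) < (q:ℚ)^((c:ℤ)+1) := by
    rw [← hcast1]; exact_mod_cast Nat.lt_pow_succ_log_self hq r
  have e1 : (q:ℚ) * (q:ℚ)^((c:ℤ)-1) = (q:ℚ)^(c:ℤ) := by
    rw [mul_comm, ← zpow_add_one₀ hne]; ring_nf
  have e2 : (q:ℚ) * (q:ℚ)^(c:ℤ) = (q:ℚ)^((c:ℤ)+1) := by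
    rw [mul_comm, ← zpow_add_one₀ hne]
  have frac_nonneg : 0 ≤ ((r:ℚ) - (q:ℚ)^(c:ℤ)) /
      ((q:ℚ)^(c:ℤ) - (q:ℚ)^((c:ℤ)-1)) := div_nonneg (by linarith) hD.le
  have frac_le : ((r:ℚ) - (q:ℚ)^(c:ℤ)) /
      ((q:ℚ)^(c:ℤ) - (q:ℚ)^((c:ℤ)-1)) ≤ q := by
    rw [div_le_iff₀ hD]
    nlinarith
  have hcL : (c:ℚ) ≤ (Nat.log q (n-1) : ℚ) := by
    exact_mod_cast Nat.log_mono_right hrn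
  have hc0 : (0:ℚ) ≤ (c:ℚ) := by positivity
  constructor
  · have : 0 ≤ (c:ℚ) * q := by positivity
    unfold phi; rw [← hc]; linarith
  · unfold phi; rw [← hc]
    push_cast
    nlinarith [mul_le_mul_of_nonneg_right hcL hq0.le]
end

section
/- Let q > 1 be an integer and define φ(r) = (r - q^c)/(q^c - q^(c-1)) + c·q with c = ⌊log_q r⌋. Then φ is strictly increasing on the positive integers. -/
lemma phi_Dpos (q : ℕ) (hq : 1 < q) (c : ℕ) :
    0 < (q : ℚ) ^ (c : ℤ) - (q : ℚ) ^ ((c : ℤ) - 1) := by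
  have hq1 : (1 : ℚ) < q := by exact_mod_cast hq
  have := zpow_lt_zpow_right₀ hq1 (show (c : ℤ) - 1 < c by omega)
  linarith

lemma phi_step (q : ℕ) (hq : 1 < q) (a : ℕ) (ha : 1 ≤ a) :
    phi q a < phi q (a + 1) := by
  have hq1 : (1 : ℚ) < q := by exact_mod_cast hq
  have hq0 : (q : ℚ) ≠ 0 := by positivity
  set c := Nat.log q a with hc
  have hlt : a < q ^ (c + 1) := Nat.lt_pow_succ_log_self hq a
  have hmono : c ≤ Nat.log q (a + 1) := Nat.log_mono_right (by omega)
  rcases lt_or_eq_of_le (show a + 1 ≤ q ^ (c + 1) by omega) with h | h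
  · -- log stays the same
    have hlog : Nat.log q (a + 1) = c := by
      have := Nat.log_lt_of_lt_pow (show a+1 ≠ 0 by omega) h
      omega
    have hD := phi_Dpos q hq c
    unfold phi
    rw [hlog, ← hc]
    push_cast
    gcongr
    linarith
  · -- a + 1 = q ^ (c+1), log jumps to c + 1
    have hlog : Nat.log q (a + 1) = c + 1 := by
      rw [h, Nat.log_pow hq]
    have ha' : (a : ℚ) = (q : ℚ) ^ ((c : ℤ) + 1) - 1 := by
      have h2 : ((a : ℚ) + 1) = ((q ^ (c + 1) : ℕ) : ℚ) := by exact_mod_cast h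
      push_cast at h2
      rw [← zpow_natCast (q : ℚ) (c + 1)] at h2
      push_cast at h2
      linarith
    have hD := phi_Dpos q hq c
    have hD' := phi_Dpos q hq (c + 1)
    unfold phi
    rw [hlog, ← hc]
    have e1 : (q : ℚ) ^ ((c : ℤ) + 1) = (q : ℚ) ^ (c : ℤ) * q := zpow_add_one₀ hq0 _
    have e2 : (q : ℚ) ^ (c : ℤ) = (q : ℚ) ^ ((c : ℤ) - 1) * q := by
      rw [← zpow_add_one₀ hq0]; ring_nf
    have key : ((a : ℚ) - (q : ℚ) ^ (c : ℤ)) /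
        ((q : ℚ) ^ (c : ℤ) - (q : ℚ) ^ ((c : ℤ) - 1)) < q := by
      rw [div_lt_iff₀ hD, ha']
      nlinarith
    have hnum : ((a : ℚ) + 1) - (q : ℚ) ^ ((c : ℤ) + 1) = 0 := by
      rw [ha']; ring
    push_cast
    push_cast at hnum key ⊢
    rw [hnum, zero_div]
    linarith

/-- `φ` is strictly increasing on the positive integers. -/
theorem phi_strictMono (q : ℕ) (hq : 1 < q) :
    ∀ a b : ℕ, 1 ≤ a → a < b → phi q a < phi q b := by
  intro a b ha hab
  obtain ⟨n, rfl⟩ : ∃ n, b = a + 1 + n := ⟨b - (a + 1), by omega⟩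
  clear hab
  induction n with
  | zero => exact phi_step q hq a ha
  | succ n ih =>
      have h2 := phi_step q hq (a + 1 + n) (by omega)
      calc phi q a < phi q (a + 1 + n) := ih
        _ < _ := h2
end

section
/- Let q > 1 be an integer and φ(r) = (r - q^c)/(q^c - q^(c-1)) + c·q with c = ⌊log_q r⌋. If a < b are positive integers with the same category (⌊log_q a⌋ = ⌊log_q b⌋), then φ(b) - φ(b - a) ≥ 1. -/
lemma phi_eq (q r : ℕ) (hq : 1 < q) :
    phi q r = ((r:ℚ)*q - (q:ℚ)^(Nat.log q r + 1)) /
      ((q:ℚ)^(Nat.log q r) * ((q:ℚ)-1)) + (Nat.log q r : ℚ) * q := by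
  have hQ : (1:ℚ) < (q:ℚ) := by exact_mod_cast hq
  have hQ0 : (q:ℚ) ≠ 0 := by positivity
  unfold phi
  rw [zpow_sub_one₀ hQ0, zpow_natCast]
  have hp : (0:ℚ) < (q:ℚ)^(Nat.log q r) := pow_pos (by linarith) _
  have hi : (q:ℚ)⁻¹ < 1 := inv_lt_one_of_one_lt₀ hQ
  have hD1 : ((q:ℚ)^(Nat.log q r) - (q:ℚ)^(Nat.log q r) * (q:ℚ)⁻¹) ≠ 0 :=
    ne_of_gt (by nlinarith)
  have hD2 : ((q:ℚ)^(Nat.log q r) * ((q:ℚ)-1)) ≠ 0 :=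
    ne_of_gt (by nlinarith)
  congr 1
  rw [div_eq_div_iff hD1 hD2]
  field_simp
  ring

set_option maxHeartbeats 1000000

/-- If `a < b` are positive integers with the same category, then
`φ(b) - φ(b - a) ≥ 1` (linking same-category nodes decreases potential by ≥ 1). -/
theorem phi_link_decrease (q a b : ℕ) (hq : 1 < q) (ha : 1 ≤ a) (hab : a < b)
    (hcat : Nat.log q a = Nat.log q b) :
    1 ≤ phi q b - phi q (b - a) := by
  have hQ : (2:ℚ) ≤ (q:ℚ) := by exact_mod_cast hq
  set c := Nat.log q b with hc
  set c' := Nat.log q (b - a) with hc'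
  have hm0 : b - a ≠ 0 := by omega
  have h1 : q ^ c ≤ a := by
    rw [← hcat]; exact Nat.pow_log_le_self q (by omega)
  have h2 : q ^ c' ≤ b - a := Nat.pow_log_le_self q hm0
  have h3 : b - a < q ^ (c' + 1) := Nat.lt_pow_succ_log_self hq _
  have hcc : c' ≤ c := Nat.log_mono_right (Nat.sub_le b a)
  -- rational versions
  have hA : (q:ℚ) ^ c ≤ (a:ℚ) := by exact_mod_cast h1
  have hBA : ((b - a : ℕ) : ℚ) = (b:ℚ) - (a:ℚ) := by
    push_cast [Nat.cast_sub hab.le]; ring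
  have hM1 : (q:ℚ) ^ c' ≤ (b:ℚ) - (a:ℚ) := by rw [← hBA]; exact_mod_cast h2
  have hM2 : (b:ℚ) - (a:ℚ) ≤ (q:ℚ) ^ (c' + 1) - 1 := by
    rw [← hBA]
    have : ((b - a : ℕ) : ℚ) + 1 ≤ (q:ℚ) ^ (c' + 1) := by exact_mod_cast h3
    linarith
  rw [phi_eq q b hq, phi_eq q (b - a) hq, ← hc, ← hc', hBA]
  clear_value c c'
  clear hc hc' hcat
  have hQ0 : (0:ℚ) < (q:ℚ) := by linarith
  have hX : (0:ℚ) < (q:ℚ) ^ c' := pow_pos hQ0 c'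
  have hXc : (0:ℚ) < (q:ℚ) ^ c := pow_pos hQ0 c
  have hd1 : (0:ℚ) < (q:ℚ) ^ c * ((q:ℚ) - 1) := by
    apply mul_pos hXc; linarith
  have hd2 : (0:ℚ) < (q:ℚ) ^ c' * ((q:ℚ) - 1) := by
    apply mul_pos hX; linarith
  rcases eq_or_lt_of_le hcc with heq | hlt
  · -- same category for b and b - a
    subst heq
    have key : ((b:ℚ)*q - (q:ℚ)^(c'+1)) / ((q:ℚ)^c' * ((q:ℚ)-1)) + (c':ℚ) * q -
        ((((b:ℚ)-(a:ℚ))*q - (q:ℚ)^(c'+1)) / ((q:ℚ)^c' * ((q:ℚ)-1)) + (c':ℚ) * q)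
        = (a:ℚ) * q / ((q:ℚ)^c' * ((q:ℚ)-1)) := by
      field_simp
      ring
    rw [key, le_div_iff₀ hd2]
    nlinarith [mul_le_mul_of_nonneg_right hA (le_of_lt hQ0)]
  · -- categories differ
    obtain ⟨k, rfl⟩ : ∃ k, c = c' + 1 + k := ⟨c - c' - 1, by omega⟩
    rcases Nat.eq_zero_or_pos k with rfl | hk
    · -- c = c' + 1
      simp only [Nat.add_zero] at *
      have hne1 : ((q:ℚ) ^ (c'+1) * ((q:ℚ) - 1)) ≠ 0 := ne_of_gt hd1
      have hne2 : ((q:ℚ) ^ c' * ((q:ℚ) - 1)) ≠ 0 := ne_of_gt hd2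
      have hq1 : (0:ℚ) < (q:ℚ) - 1 := by linarith
      have hAq : (q:ℚ) ^ c' * (q:ℚ) ≤ (a:ℚ) := by
        rw [← pow_succ]; exact hA
      have key : 1 - (q:ℚ) ≤ ((b:ℚ)*q - (q:ℚ)^(c'+1+1)) / ((q:ℚ)^(c'+1) * ((q:ℚ)-1))
          - ((((b:ℚ)-(a:ℚ))*q - (q:ℚ)^(c'+1)) / ((q:ℚ)^c' * ((q:ℚ)-1))) := by
        rw [div_sub_div _ _ hne1 hne2, le_div_iff₀ (mul_pos hd1 hd2)]
        have e1 : (q:ℚ)^(c'+1) = (q:ℚ)^c' * q := by ring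
        have e2 : (q:ℚ)^(c'+1+1) = (q:ℚ)^c' * q * q := by ring
        rw [e1, e2]
        have hM2' : (b:ℚ) - (a:ℚ) ≤ (q:ℚ)^c' * q - 1 := by rw [e1] at hM2; exact hM2
        nlinarith [mul_nonneg (mul_nonneg (sub_nonneg.2 hAq) hQ0.le) (mul_pos hX hq1).le,
          mul_nonneg (mul_nonneg (by linarith : (0:ℚ) ≤ (q:ℚ)^c' * q - 1 - ((b:ℚ)-(a:ℚ))) (mul_pos hQ0 hq1).le) (mul_pos hX hq1).le,
          mul_pos hX hQ0, mul_nonneg (mul_pos hQ0 hq1).le hX.le, mul_pos hQ0 hq1, hX.le, hq1.le]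
      push_cast
      linarith
    · -- c ≥ c' + 2
      have hT1 : 0 ≤ ((b:ℚ)*q - (q:ℚ)^(c'+1+k+1)) / ((q:ℚ)^(c'+1+k) * ((q:ℚ)-1)) := by
        apply div_nonneg _ hd1.le
        have hB : (q:ℚ) ^ (c'+1+k) ≤ (b:ℚ) := by
          have : (a:ℚ) ≤ (b:ℚ) := by exact_mod_cast hab.le
          linarith
        calc (0:ℚ) ≤ (q:ℚ)^(c'+1+k) * q - (q:ℚ)^(c'+1+k+1) := by
                rw [← pow_succ, sub_self]
               _ ≤ (b:ℚ)*q - (q:ℚ)^(c'+1+k+1) := by nlinarith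
      have hT2 : (((b:ℚ)-(a:ℚ))*q - (q:ℚ)^(c'+1)) / ((q:ℚ)^c' * ((q:ℚ)-1)) ≤ (q:ℚ) := by
        rw [div_le_iff₀ hd2]
        have : (b:ℚ) - (a:ℚ) ≤ (q:ℚ)^c' * q := by
          have e1 : (q:ℚ)^(c'+1) = (q:ℚ)^c' * q := by ring
          nlinarith
        nlinarith
      have hck : ((c' + 1 + k : ℕ) : ℚ) * q - (c' : ℚ) * q ≥ 2 * q := by
        push_cast
        have : (1:ℚ) ≤ (k:ℚ) := by exact_mod_cast hk
        nlinarith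
      linarith
end
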